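/- For every odd integer n ≥ 5, the symmetric group S_n satisfies γ(S_n) ≤ (n−1)/2. -/

import Mathlib

/-- The normal covering number γ(G): the smallest `k` such that there exist
proper subgroups `H 1, …, H k` of `G` whose conjugates cover `G`. -/
noncomputable def normalCoveringNumber (G : Type*) [Group G] : ℕ :=
  sInf {k : ℕ | ∃ H : Fin k → Subgroup G, (∀ i, H i ≠ ⊤) ∧
    ∀ g : G, ∃ i, ∃ x : G, x * g * x⁻¹ ∈ H i}

open Equiv Equiv.Perm MulAction
open scoped Pointwise

/-!
Write `m = (n - 1) / 2`. A permutation leaving a `k`-subset invariant is conjugate into the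
stabiliser of any fixed `k`-subset, so it suffices to find a set `K ⊆ [1, m]` of `m - 1` sizes
and one more proper subgroup `H` such that every permutation either has an invariant subset
with size in `K` or is conjugate into `H`.

If `n` is prime, take `K = [2, m]` and for `H` the affine group, the normaliser of the
translations of `ZMod n`. A permutation with at most one fixed point and no cycle of length
at most `m` is an `n`-cycle or an `(n - 1)`-cycle, conjugate to `x ↦ x + 1` or to
`x ↦ a * x` for a generator `a` of `(ZMod n)ˣ`.

If `n` is composite with a prime factor `p < n`, take `K = [1, m] \ {p}` and for `H` the
centraliser of a fixed-point-free `z` with `z ^ p = 1`. A fixed-point-free permutation `g`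
whose cycles have length `p` or more than `n / 2` has all cycle lengths divisible by `p`
(there is at most one long cycle and `p ∣ n`). Acting as `g ^ (ℓ / p)` on each `ℓ`-cycle of
`g` then defines a fixed-point-free element of order `p` commuting with `g`, and it is
conjugate to `z`.
-/

section NormalCovering

variable {G G' ι : Type*} [Group G] [Group G']

def IsNormalCovering (H : ι → Subgroup G) : Prop :=
  (∀ i, H i ≠ ⊤) ∧ ∀ g : G, ∃ i, ∃ x : G, x * g * x⁻¹ ∈ H i

theorem IsNormalCovering.comp_equiv {ι' : Type*} {H : ι → Subgroup G}
    (hH : IsNormalCovering H) (e : ι' ≃ ι) : IsNormalCovering (H ∘ e) := by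
  refine ⟨fun i => hH.1 (e i), fun g => ?_⟩
  obtain ⟨i, x, hx⟩ := hH.2 g
  exact ⟨e.symm i, x, by simpa using hx⟩

theorem IsNormalCovering.map {H : ι → Subgroup G} (hH : IsNormalCovering H) (e : G ≃* G') :
    IsNormalCovering fun i => (H i).map e.toMonoidHom := by
  refine ⟨fun i htop => hH.1 i ?_, fun g => ?_⟩
  · rw [← Subgroup.comap_map_eq_self_of_injective (f := e.toMonoidHom) e.injective (H i)]
    simp only at htop
    rw [htop, Subgroup.comap_top]
  · obtain ⟨i, x, hx⟩ := hH.2 (e.symm g)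
    exact ⟨i, e x, x * e.symm g * x⁻¹, hx, by simp⟩

theorem normalCoveringNumber_le_card [Fintype ι] {H : ι → Subgroup G}
    (hH : IsNormalCovering H) : normalCoveringNumber G ≤ Fintype.card ι :=
  Nat.sInf_le ⟨_, hH.comp_equiv (Fintype.equivFin ι).symm⟩

theorem MulEquiv.normalCoveringNumber_eq (e : G ≃* G') :
    normalCoveringNumber G = normalCoveringNumber G' := by
  unfold normalCoveringNumber
  congr 1
  ext k
  exact ⟨fun ⟨H, hH⟩ => ⟨_, IsNormalCovering.map hH e⟩,
    fun ⟨H, hH⟩ => ⟨_, IsNormalCovering.map hH e.symm⟩⟩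

end NormalCovering

section Conj

variable {G : Type*} [Group G]

theorem Subgroup.exists_conj_mem_of_isConj {H : Subgroup G} {h g : G} (hh : h ∈ H)
    (hhg : IsConj h g) : ∃ x : G, x * g * x⁻¹ ∈ H := by
  obtain ⟨c, rfl⟩ := isConj_iff.mp hhg
  exact ⟨c⁻¹, by simpa [mul_assoc] using hh⟩

theorem Subgroup.exists_conj_mem_centralizer_of_isConj {g w z : G} (hgw : Commute g w)
    (hzw : IsConj z w) : ∃ x : G, x * g * x⁻¹ ∈ Subgroup.centralizer {z} := by
  obtain ⟨c, rfl⟩ := isConj_iff.mp hzw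
  refine ⟨c⁻¹, Subgroup.mem_centralizer_singleton_iff.mpr ?_⟩
  simpa [mul_assoc] using (hgw.conj c⁻¹).eq

end Conj

namespace Equiv.Perm

variable {α : Type*} [DecidableEq α]

theorem smul_finset_eq_of_mapsTo {g : Perm α} {s : Finset α} (h : ∀ x ∈ s, g x ∈ s) :
    g • s = s :=
  Finset.eq_of_subset_of_card_le (Finset.smul_finset_subset_iff.mpr fun x hx => by
      simpa [Finset.mem_inv_smul_finset_iff] using h x hx)
    (Finset.card_smul_finset g s).ge

theorem exists_smul_finset_eq {s t : Finset α} (h : s.card = t.card) :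
    ∃ x : Perm α, x • s = t := by
  have := Set.powersetCard.isPretransitive (α := α) (n := t.card)
  obtain ⟨x, hx⟩ := exists_smul_eq (Perm α)
    (⟨s, h⟩ : Set.powersetCard α t.card) ⟨t, rfl⟩
  exact ⟨x, by simpa using congrArg Subtype.val hx⟩

variable [Fintype α]

theorem stabilizer_finset_ne_top {t : Finset α} (h0 : 0 < t.card)
    (h1 : t.card < Fintype.card α) : stabilizer (Perm α) t ≠ ⊤ := by
  obtain ⟨a, ha⟩ := Finset.card_pos.mp h0
  obtain ⟨b, -, hb⟩ := Finset.exists_mem_notMem_of_card_lt_card (t := Finset.univ) h1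
  intro htop
  have hswap : swap a b • t = t := mem_stabilizer_iff.mp (htop ▸ Subgroup.mem_top _)
  have hbt := Finset.smul_mem_smul_finset (a := swap a b) ha
  rw [hswap, Perm.smul_def, swap_apply_left] at hbt
  exact hb hbt

theorem exists_smul_finset_eq_self_of_mem_cycleType {g : Perm α} {ℓ : ℕ}
    (h : ℓ ∈ g.cycleType) : ∃ s : Finset α, g • s = s ∧ s.card = ℓ := by
  obtain ⟨c, hc, rfl⟩ := Multiset.mem_map.mp (g.cycleType_def ▸ h)
  refine ⟨c.support, smul_finset_eq_of_mapsTo fun x hx => ?_, rfl⟩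
  rw [← (mem_cycleFactorsFinset_iff.mp hc).2 x hx]
  exact apply_mem_support.mpr hx

theorem card_support_cycleOf_mem_cycleType {g : Perm α} {x : α} (hx : g x ≠ x) :
    (g.cycleOf x).support.card ∈ g.cycleType := by
  rw [cycleType_def]
  exact Multiset.mem_map_of_mem _ (cycleOf_mem_cycleFactorsFinset_iff.mpr (mem_support.mpr hx))

theorem add_le_card_of_mem_erase_cycleType {g : Perm α} {a b : ℕ} (ha : a ∈ g.cycleType)
    (hb : b ∈ g.cycleType.erase a) : a + b ≤ Fintype.card α :=
  calc a + b ≤ a + (g.cycleType.erase a).sum := by grw [Multiset.le_sum_of_mem hb]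
    _ = g.cycleType.sum := Multiset.sum_erase ha
    _ ≤ Fintype.card α := sum_cycleType_le g

theorem sum_cycleType_eq_card_of_forall_ne {g : Perm α} (hfix : ∀ x, g x ≠ x) :
    g.cycleType.sum = Fintype.card α := by
  rw [sum_cycleType, Finset.eq_univ_of_forall fun x => mem_support.mpr (hfix x), Finset.card_univ]

theorem cycleType_eq_replicate_of_pow_prime_eq_one {g : Perm α} {p : ℕ} [Fact p.Prime]
    (hg : g ^ p = 1) (hfix : ∀ x, g x ≠ x) :
    g.cycleType = Multiset.replicate (Fintype.card α / p) p := by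
  have hcard : g.cycleType.card * p = Fintype.card α := by
    rw [← sum_cycleType_eq_card_of_forall_ne hfix, cycleType_of_pow_prime_eq_one hg,
      Multiset.sum_replicate, smul_eq_mul, Multiset.card_replicate]
  rw [cycleType_of_pow_prime_eq_one hg, ← hcard, Nat.mul_div_cancel _ (Fact.out : p.Prime).pos]

theorem centralizer_singleton_ne_top {z : Perm α} (hz : z ≠ 1) (hα : 3 ≤ Fintype.card α) :
    Subgroup.centralizer {z} ≠ ⊤ := by
  obtain ⟨a, ha⟩ : ∃ a, z a ≠ a := by
    by_contra! h
    exact hz (Equiv.ext h)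
  obtain ⟨c, -, hc⟩ := Finset.exists_mem_notMem_of_card_lt_card (s := {a, z a})
    (t := Finset.univ) ((Finset.card_le_two).trans_lt (by rw [Finset.card_univ]; omega))
  rw [Finset.mem_insert, Finset.mem_singleton, not_or] at hc
  intro htop
  have hcomm := Subgroup.mem_centralizer_singleton_iff.mp (htop ▸ Subgroup.mem_top (swap a c))
  have := congrArg (· a) hcomm
  simp only [Perm.mul_apply, swap_apply_left, swap_apply_of_ne_of_ne ha (Ne.symm hc.2)] at this
  exact hc.1 (z.injective this.symm)

theorem dvd_of_mem_cycleType_of_card_lt_two_mul {g : Perm α} {p : ℕ} (hfix : ∀ x, g x ≠ x)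
    (hpα : p ∣ Fintype.card α) (hlarge : ∀ ℓ ∈ g.cycleType, ℓ ≠ p → Fintype.card α < 2 * ℓ)
    {ℓ : ℕ} (hℓ : ℓ ∈ g.cycleType) : p ∣ ℓ := by
  by_cases hℓp : ℓ = p
  · exact hℓp ▸ dvd_rfl
  have hrest : ∀ ℓ' ∈ g.cycleType.erase ℓ, p ∣ ℓ' := fun ℓ' hℓ' => by
    by_contra hpℓ'
    have := hlarge ℓ' (Multiset.mem_of_mem_erase hℓ') fun h => hpℓ' (h ▸ dvd_rfl)
    have := hlarge ℓ hℓ hℓp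
    have := add_le_card_of_mem_erase_cycleType hℓ hℓ'
    omega
  rw [← sum_cycleType_eq_card_of_forall_ne hfix, ← Multiset.sum_erase hℓ] at hpα
  exact (Nat.dvd_add_left (Multiset.dvd_sum hrest)).mp hpα

theorem isCycle_of_forall_card_lt_two_mul {g : Perm α} (hg : g ≠ 1)
    (h : ∀ ℓ ∈ g.cycleType, Fintype.card α < 2 * ℓ) : g.IsCycle := by
  obtain ⟨L, hL⟩ := Multiset.exists_mem_of_ne_zero (mt cycleType_eq_zero.mp hg)
  have herase : g.cycleType.erase L = 0 := Multiset.eq_zero_of_forall_notMem fun ℓ hℓ => by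
    have := add_le_card_of_mem_erase_cycleType hL hℓ
    have := h L hL
    have := h ℓ (Multiset.mem_of_mem_erase hℓ)
    omega
  rw [← card_cycleType_eq_one, ← Multiset.cons_erase hL, herase]
  rfl

theorem exists_cycleType_eq_replicate {p : ℕ} (hp : 2 ≤ p) (hpα : p ∣ Fintype.card α) :
    ∃ z : Perm α, z.cycleType = Multiset.replicate (Fintype.card α / p) p :=
  (exists_with_cycleType_iff α).mpr
    ⟨by rw [Multiset.sum_replicate, smul_eq_mul, Nat.div_mul_cancel hpα],
      fun a ha => Multiset.eq_of_mem_replicate ha ▸ hp⟩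

def cyclewisePowDiv (g : Perm α) (p : ℕ) : Perm α where
  toFun x := (g ^ ((g.cycleOf x).support.card / p)) x
  invFun x := (g ^ ((g.cycleOf x).support.card / p))⁻¹ x
  left_inv x := by simp [cycleOf_self_apply_pow]
  right_inv x := by
    have h : ∀ k : ℕ, g.cycleOf ((g ^ k)⁻¹ x) = g.cycleOf x := fun k => by
      rw [← zpow_natCast, ← zpow_neg, cycleOf_self_apply_zpow]
    dsimp only
    rw [h]
    exact Equiv.apply_symm_apply _ _

theorem cyclewisePowDiv_apply (g : Perm α) (p : ℕ) (x : α) :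
    cyclewisePowDiv g p x = (g ^ ((g.cycleOf x).support.card / p)) x := rfl

theorem commute_cyclewisePowDiv (g : Perm α) (p : ℕ) : Commute g (cyclewisePowDiv g p) := by
  change g * _ = _ * g
  ext x
  rw [Perm.mul_apply, Perm.mul_apply, cyclewisePowDiv_apply, cyclewisePowDiv_apply,
    cycleOf_self_apply, ← Perm.mul_apply, ← Perm.mul_apply, ← pow_succ, ← pow_succ']

theorem cyclewisePowDiv_pow_apply (g : Perm α) (p k : ℕ) (x : α) :
    (cyclewisePowDiv g p ^ k) x = (g ^ (k * ((g.cycleOf x).support.card / p))) x := by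
  induction k with
  | zero => simp
  | succ k ih =>
    rw [pow_succ', Perm.mul_apply, ih, cyclewisePowDiv_apply, cycleOf_self_apply_pow,
      ← Perm.mul_apply, ← pow_add, add_comm, ← Nat.succ_mul]

theorem cyclewisePowDiv_pow_eq_one {g : Perm α} {p : ℕ}
    (hdvd : ∀ x, p ∣ (g.cycleOf x).support.card) : cyclewisePowDiv g p ^ p = 1 := by
  ext x
  rw [cyclewisePowDiv_pow_apply, Nat.mul_div_cancel' (hdvd x),
    ← pow_mod_card_support_cycleOf_self_apply, Nat.mod_self, pow_zero]

theorem cyclewisePowDiv_apply_ne {g : Perm α} {p : ℕ} (hp : 2 ≤ p) {x : α}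
    (hdvd : p ∣ (g.cycleOf x).support.card) (hx : g x ≠ x) : cyclewisePowDiv g p x ≠ x := by
  have hcyc : (g.cycleOf x).IsCycle := isCycle_cycleOf g hx
  have hℓ : 0 < (g.cycleOf x).support.card := by have := hcyc.two_le_card_support; omega
  have hℓp : 0 < (g.cycleOf x).support.card / p := Nat.div_pos (Nat.le_of_dvd hℓ hdvd) (by omega)
  intro h
  rw [cyclewisePowDiv_apply, ← cycleOf_pow_apply_self,
    ← hcyc.pow_eq_one_iff' (by rwa [cycleOf_apply_self])] at h
  have := Nat.le_of_dvd hℓp (hcyc.orderOf ▸ orderOf_dvd_of_pow_eq_one h)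
  exact (Nat.div_lt_self hℓ hp).not_ge this

end Equiv.Perm

theorem normalCoveringNumber_perm_le_card_add_one {α : Type*} [Fintype α] [DecidableEq α]
    {H : Subgroup (Perm α)} (hH : H ≠ ⊤) {K : Finset ℕ}
    (hK : ∀ k ∈ K, 0 < k ∧ k < Fintype.card α)
    (hcover : ∀ g : Perm α, (∃ x, x * g * x⁻¹ ∈ H) ∨ ∃ s : Finset α, g • s = s ∧ s.card ∈ K) :
    normalCoveringNumber (Perm α) ≤ K.card + 1 := by
  have hK' : ∀ k : K, ∃ t : Finset α, t.card = k := fun k =>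
    let ⟨t, _, ht⟩ := Finset.exists_subset_card_eq (s := Finset.univ)
      ((hK k k.2).2.le.trans_eq Finset.card_univ.symm)
    ⟨t, ht⟩
  choose t ht using hK'
  have hcov : IsNormalCovering fun i : Option K => i.elim H fun k => stabilizer (Perm α) (t k) := by
    refine ⟨fun i => ?_, fun g => ?_⟩
    · cases i with
      | none => exact hH
      | some k =>
        exact stabilizer_finset_ne_top ((ht k).symm ▸ (hK k k.2).1) ((ht k).symm ▸ (hK k k.2).2)
    · obtain ⟨x, hx⟩ | ⟨s, hgs, hsK⟩ := hcover g
      · exact ⟨none, x, hx⟩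
      · obtain ⟨x, hxs⟩ := exists_smul_finset_eq (s := s) (t := t ⟨_, hsK⟩) (ht ⟨_, hsK⟩).symm
        refine ⟨some ⟨_, hsK⟩, x, ?_⟩
        change x * g * x⁻¹ ∈ stabilizer (Perm α) (t ⟨_, hsK⟩)
        rw [← hxs, stabilizer_smul_eq_stabilizer_map_conj]
        exact ⟨g, hgs, rfl⟩
  simpa using normalCoveringNumber_le_card hcov

theorem Nat.three_mul_le_of_dvd_of_lt {p n : ℕ} (hn : Odd n) (hpn : p ∣ n) (hlt : p < n) :
    3 * p ≤ n := by
  obtain ⟨b, rfl⟩ := hpn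
  have hb1 : b ≠ 1 := by rintro rfl; omega
  obtain ⟨k, rfl⟩ := (Nat.odd_mul.mp hn).2
  rw [mul_comm]
  exact Nat.mul_le_mul_left p (by omega)

theorem normalCoveringNumber_perm_le_of_prime_dvd {α : Type*} [Fintype α] [DecidableEq α]
    (hodd : Odd (Fintype.card α)) {p : ℕ} (hp : p.Prime) (hpα : p ∣ Fintype.card α)
    (hpα' : p < Fintype.card α) :
    normalCoveringNumber (Perm α) ≤ (Fintype.card α - 1) / 2 := by
  have := Fact.mk hp
  have hp1 := hp.one_lt
  have hp3 := Nat.three_mul_le_of_dvd_of_lt hodd hpα hpα'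
  obtain ⟨m, hm⟩ := hodd
  obtain ⟨z, hz⟩ := exists_cycleType_eq_replicate hp.two_le hpα
  have hz1 : z ≠ 1 := by
    rintro rfl
    have := congrArg Multiset.card hz
    rw [cycleType_one, Multiset.card_zero, Multiset.card_replicate, eq_comm,
      Nat.div_eq_zero_iff] at this
    omega
  have hcard : ((Finset.Icc 1 ((Fintype.card α - 1) / 2)).erase p).card + 1 =
      (Fintype.card α - 1) / 2 := by
    rw [Finset.card_erase_of_mem (Finset.mem_Icc.mpr (by omega)), Nat.card_Icc]
    omega
  rw [← hcard]
  refine normalCoveringNumber_perm_le_card_add_one (centralizer_singleton_ne_top hz1 (by omega))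
    (fun k hk => by simp only [Finset.mem_erase, Finset.mem_Icc] at hk; omega) fun g => ?_
  by_cases hfix : ∃ x, g x = x
  · obtain ⟨x, hx⟩ := hfix
    refine Or.inr ⟨{x}, smul_finset_eq_of_mapsTo (by simp [hx]), ?_⟩
    simp only [Finset.card_singleton, Finset.mem_erase, Finset.mem_Icc]
    omega
  push Not at hfix
  by_cases hsmall : ∃ ℓ ∈ g.cycleType, ℓ ≤ (Fintype.card α - 1) / 2 ∧ ℓ ≠ p
  · obtain ⟨ℓ, hℓ, hℓm, hℓp⟩ := hsmall
    obtain ⟨s, hs, rfl⟩ := exists_smul_finset_eq_self_of_mem_cycleType hℓ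
    have := two_le_of_mem_cycleType hℓ
    refine Or.inr ⟨s, hs, ?_⟩
    simp only [Finset.mem_erase, Finset.mem_Icc]
    omega
  push Not at hsmall
  have hdvd : ∀ x, p ∣ (g.cycleOf x).support.card := fun x =>
    dvd_of_mem_cycleType_of_card_lt_two_mul hfix hpα
      (fun ℓ hℓ hℓp => by have := mt (hsmall ℓ hℓ) hℓp; omega)
      (card_support_cycleOf_mem_cycleType (hfix x))
  have hzw : IsConj z (cyclewisePowDiv g p) := by
    rw [isConj_iff_cycleType_eq, hz, cycleType_eq_replicate_of_pow_prime_eq_one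
      (cyclewisePowDiv_pow_eq_one hdvd)
      fun x => cyclewisePowDiv_apply_ne hp.two_le (hdvd x) (hfix x)]
  exact Or.inl (Subgroup.exists_conj_mem_centralizer_of_isConj (commute_cyclewisePowDiv g p) hzw)

def affineGroup (n : ℕ) : Subgroup (Perm (ZMod n)) :=
  Subgroup.normalizer (Subgroup.zpowers (Equiv.addRight (1 : ZMod n)) : Set (Perm (ZMod n)))

theorem affineGroup_ne_top {n : ℕ} (hn : 4 ≤ n) : affineGroup n ≠ ⊤ := by
  rw [affineGroup, Ne, Subgroup.normalizer_eq_top_iff]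
  intro hN
  obtain ⟨k, hk⟩ := Subgroup.mem_zpowers_iff.mp
    (hN.conj_mem _ (Subgroup.mem_zpowers _) (swap (0 : ZMod n) 1))
  have hcast : ∀ j : ℕ, 0 < j → j < n → (j : ZMod n) ≠ 0 := fun j h0 hj h =>
    Nat.not_dvd_of_pos_of_lt h0 hj ((ZMod.natCast_eq_zero_iff j n).mp h)
  have h0 := congrArg (· 0) hk
  have h1 := congrArg (· 1) hk
  simp only [zsmul_addRight, zsmul_eq_mul, mul_one, coe_addRight, zero_add, swap_inv, coe_mul,
    Function.comp_apply, swap_apply_left, swap_apply_right] at h0 h1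
  have h2 : (2 : ZMod n) ≠ 0 := by exact_mod_cast hcast 2 (by omega) (by omega)
  have h21 : (2 : ZMod n) ≠ 1 := fun h =>
    hcast 1 (by omega) (by omega) (by push_cast; linear_combination h)
  rw [one_add_one_eq_two, swap_apply_of_ne_of_ne h2 h21] at h0
  exact hcast 3 (by omega) (by omega) (by push_cast; linear_combination h1 - h0)

theorem addRight_one_mem_affineGroup (n : ℕ) : Equiv.addRight (1 : ZMod n) ∈ affineGroup n :=
  Subgroup.le_normalizer (Subgroup.mem_zpowers _)

theorem toPerm_mem_affineGroup {n : ℕ} [NeZero n] (a : (ZMod n)ˣ) :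
    toPerm a ∈ affineGroup n := by
  refine Subgroup.mem_normalizer_fintype fun g hg => ?_
  obtain ⟨k, rfl⟩ := Subgroup.mem_zpowers_iff.mp hg
  have hconj : toPerm a * Equiv.addRight 1 * (toPerm a)⁻¹ =
      Equiv.addRight (1 : ZMod n) ^ (a : ZMod n).val := by
    ext x
    simp [Units.smul_def]
  rw [← conj_zpow, hconj, ← zpow_natCast, ← zpow_mul]
  exact Subgroup.zpow_mem_zpowers _ _

theorem cycleType_addRight_one (p : ℕ) [Fact p.Prime] :
    (Equiv.addRight (1 : ZMod p)).cycleType = {p} := by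
  have hne : Equiv.addRight (1 : ZMod p) ≠ 1 := fun h =>
    one_ne_zero (α := ZMod p) (by simpa using congrArg (· 0) h)
  have hord : orderOf (Equiv.addRight (1 : ZMod p)) = p := by
    refine orderOf_eq_prime ?_ hne
    ext x
    simp
  have hcyc := isCycle_of_prime_order'' (by rw [ZMod.card]; exact Fact.out)
    (hord.trans (ZMod.card p).symm)
  rw [hcyc.cycleType, ← hcyc.orderOf, hord]

theorem toPerm_apply_eq_self_iff {p : ℕ} [Fact p.Prime] {a : (ZMod p)ˣ} (ha : a ≠ 1)
    {x : ZMod p} : toPerm a x = x ↔ x = 0 := by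
  rw [toPerm_apply, Units.smul_def, smul_eq_mul]
  constructor
  · intro h
    by_contra hx
    exact ha (Units.ext ((mul_eq_right₀ hx).mp h))
  · rintro rfl
    exact mul_zero _

theorem cycleType_toPerm_of_forall_mem_zpowers {p : ℕ} [Fact p.Prime] (hp : 2 < p)
    {a : (ZMod p)ˣ} (ha : ∀ u, u ∈ Subgroup.zpowers a) :
    (toPerm a : Perm (ZMod p)).cycleType = {p - 1} := by
  have ha1 : a ≠ 1 := by
    rintro rfl
    have := Fact.mk hp
    obtain ⟨k, hk⟩ := Subgroup.mem_zpowers_iff.mp (ha (-1))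
    exact ZMod.neg_one_ne_one (by simpa using congrArg Units.val hk.symm)
  have hsupp : (toPerm a : Perm (ZMod p)).support = {0}ᶜ := by
    ext x
    rw [mem_support, Finset.mem_compl, Finset.mem_singleton, Ne, toPerm_apply_eq_self_iff ha1]
  have hcyc : (toPerm a : Perm (ZMod p)).IsCycle := by
    refine ⟨1, by rw [Ne, toPerm_apply_eq_self_iff ha1]; exact one_ne_zero, fun y hy => ?_⟩
    obtain ⟨k, hk⟩ := Subgroup.mem_zpowers_iff.mp
      (ha (Units.mk0 y (mt (toPerm_apply_eq_self_iff ha1).mpr hy)))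
    refine ⟨k, ?_⟩
    change (toPermHom _ _ a ^ k) 1 = y
    rw [← map_zpow, toPermHom_apply, toPerm_apply, hk, Units.smul_def, Units.val_mk0, smul_eq_mul,
      mul_one]
  rw [hcyc.cycleType, hsupp, Finset.card_compl, ZMod.card, Finset.card_singleton]

theorem normalCoveringNumber_perm_zmod_prime_le {p : ℕ} [Fact p.Prime] (hp : 5 ≤ p) :
    normalCoveringNumber (Perm (ZMod p)) ≤ (p - 1) / 2 := by
  obtain ⟨m, hm⟩ := (Fact.out : p.Prime).odd_of_ne_two (by omega)
  have hcard : (Finset.Icc 2 ((p - 1) / 2)).card + 1 = (p - 1) / 2 := by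
    rw [Nat.card_Icc]
    omega
  rw [← hcard]
  refine normalCoveringNumber_perm_le_card_add_one (affineGroup_ne_top (by omega))
    (fun k hk => by rw [Finset.mem_Icc] at hk; rw [ZMod.card]; omega) fun g => ?_
  by_cases hsmall : ∃ ℓ ∈ g.cycleType, ℓ ≤ (p - 1) / 2
  · obtain ⟨ℓ, hℓ, hℓm⟩ := hsmall
    obtain ⟨s, hs, rfl⟩ := exists_smul_finset_eq_self_of_mem_cycleType hℓ
    exact Or.inr ⟨s, hs, Finset.mem_Icc.mpr ⟨two_le_of_mem_cycleType hℓ, hℓm⟩⟩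
  push Not at hsmall
  by_cases hfix : 1 < g.supportᶜ.card
  · obtain ⟨x, hx, y, hy, hxy⟩ := Finset.one_lt_card.mp hfix
    rw [Finset.mem_compl, notMem_support] at hx hy
    refine Or.inr ⟨{x, y}, smul_finset_eq_of_mapsTo (by simp [hx, hy]), ?_⟩
    rw [Finset.card_pair hxy, Finset.mem_Icc]
    omega
  have hsupp : p - 1 ≤ g.support.card := by
    rw [Finset.card_compl, ZMod.card] at hfix
    omega
  have hcyc : g.IsCycle := by
    refine isCycle_of_forall_card_lt_two_mul ?_ fun ℓ hℓ => ?_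
    · rintro rfl
      rw [support_one, Finset.card_empty] at hsupp
      omega
    · have := hsmall ℓ hℓ
      rw [ZMod.card]
      omega
  have := g.support.card_le_univ
  rw [ZMod.card] at this
  obtain ⟨a, ha⟩ := IsCyclic.exists_generator (α := (ZMod p)ˣ)
  rcases (show g.support.card = p - 1 ∨ g.support.card = p by omega) with h | h
  · exact Or.inl (Subgroup.exists_conj_mem_of_isConj (toPerm_mem_affineGroup a)
      (isConj_iff_cycleType_eq.mpr (by
        rw [cycleType_toPerm_of_forall_mem_zpowers (by omega) ha, hcyc.cycleType, h])))
  · exact Or.inl (Subgroup.exists_conj_mem_of_isConj (addRight_one_mem_affineGroup p)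
      (isConj_iff_cycleType_eq.mpr (by rw [cycleType_addRight_one, hcyc.cycleType, h])))

theorem gamma_sym_odd_upper (n : ℕ) (hn : 5 ≤ n) (ho : Odd n) :
    normalCoveringNumber (Equiv.Perm (Fin n)) ≤ (n - 1) / 2 := by
  by_cases hp : n.Prime
  · have := Fact.mk hp
    rw [(permCongrHom (Fintype.equivOfCardEq (by simp) : Fin n ≃ ZMod n)).normalCoveringNumber_eq]
    exact normalCoveringNumber_perm_zmod_prime_le hn
  · simpa using normalCoveringNumber_perm_le_of_prime_dvd (α := Fin n) (p := n.minFac)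
      (by simpa using ho) (Nat.minFac_prime (by omega)) (by simpa using n.minFac_dvd)
      (by simpa using (Nat.not_prime_iff_minFac_lt (by omega)).mp hp)
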